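/- Let (t_k) and (b_k) be strictly increasing real sequences with b_k > 0 and t_k → ∞, b_k → ∞, and assume Σ_k (t_{k+1} − t_k)/b_{k+1} = ∞. Let v : [0,∞) → ℝ be the piecewise linear function with v(0) = t_1 and v'(r) = b_k whenever t_k < v(r) < t_{k+1}, and set u(x) = v(|x|) on ℝⁿ. Then u is convex and super-coercive, and for almost every x with b_{k−1} < |x| < b_k (k ≥ 2), ∇u*(x)·x − u*(x) = t_k, while for almost every x with |x| < b_1, ∇u*(x)·x − u*(x) = t_1. -/

import Mathlib

/-!
Put `ρ_k = Σ_{i<k} (t_{i+1} - t_i) / b_i` (`knot t b k`). Then `v` is the broken line through the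
points `(ρ_k, t_k)` with slopes `b_k`, and the divergence of `Σ (t_{k+1} - t_k) / b_{k+1}` forces
`ρ_k → ∞`, so these pieces cover `[0, ∞)`. As the slopes increase, `v` is the maximum of the lines
extending its pieces; this gives the convexity of `u = v ∘ ‖·‖` and, since `b_k → ∞`, its
super-coercivity. For `b_{k-1} ≤ s ≤ b_k` the supremum of `r s - v r` over `r ≥ 0` is attained at the
kink `ρ_k`, so near any `x` with `b_{k-1} < ‖x‖ < b_k` the Legendre transform is
`u*(y) = ρ_k ‖y‖ - t_k`, and Euler's identity gives `∇u*(x)·x - u*(x) = t_k`.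
-/

open MeasureTheory Filter

/-- The (finite, real-valued) Legendre transform of a real-valued function on `ℝⁿ`. -/
noncomputable def conjR {n : ℕ} (u : EuclideanSpace ℝ (Fin n) → ℝ)
    (x : EuclideanSpace ℝ (Fin n)) : ℝ :=
  ⨆ y, ((inner ℝ x y : ℝ) - u y)

open Set Topology

theorem ConvexOn.of_forall_le_of_exists_eq {E ι : Type*} [AddCommMonoid E] [Module ℝ E]
    {s : Set E} {f : E → ℝ} {g : ι → E → ℝ} (hs : Convex ℝ s) (hg : ∀ i, ConvexOn ℝ s (g i))
    (hle : ∀ i, ∀ x ∈ s, g i x ≤ f x) (hex : ∀ x ∈ s, ∃ i, g i x = f x) : ConvexOn ℝ s f := by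
  refine ⟨hs, fun x hx y hy a c ha hc hac => ?_⟩
  obtain ⟨i, hi⟩ := hex _ (hs hx hy ha hc hac)
  calc f (a • x + c • y) = g i (a • x + c • y) := hi.symm
    _ ≤ a • g i x + c • g i y := (hg i).2 hx hy ha hc hac
    _ ≤ a • f x + c • f y := by gcongr <;> exact hle i _ ‹_›

theorem exists_le_and_lt_succ {α : Type*} [LinearOrder α] {f : ℕ → α} {a : α} (h₀ : f 0 ≤ a)
    {N : ℕ} (hN : a < f N) : ∃ n, f n ≤ a ∧ a < f (n + 1) := by
  induction N with
  | zero => exact absurd h₀ hN.not_ge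
  | succ N ih => exact (lt_or_ge a (f N)).elim ih fun h => ⟨N, h, hN⟩

theorem eq_add_mul_sub_of_hasDerivAt {f : ℝ → ℝ} {c a b : ℝ} (hab : a ≤ b)
    (hf : ContinuousOn f (Icc a b)) (hd : ∀ x ∈ Ioo a b, HasDerivAt f c x) :
    f b = f a + c * (b - a) := by
  rcases hab.eq_or_lt with rfl | hlt
  · ring
  obtain ⟨x, -, hx⟩ := exists_hasDerivAt_eq_slope f (fun _ => c) hlt hf hd
  rw [hx, div_mul_cancel₀ _ (sub_pos.2 hlt).ne']
  ring

noncomputable def knot (t b : ℕ → ℝ) (k : ℕ) : ℝ :=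
  ∑ i ∈ Finset.range k, (t (i + 1) - t i) / b i

section Knot

variable {t b : ℕ → ℝ}

@[simp] theorem knot_zero : knot t b 0 = 0 := Finset.sum_range_zero _

theorem knot_succ (k : ℕ) : knot t b (k + 1) = knot t b k + (t (k + 1) - t k) / b k :=
  Finset.sum_range_succ _ _

theorem succ_eq_add_mul_knot_sub (hb : ∀ k, 0 < b k) (k : ℕ) :
    t (k + 1) = t k + b k * (knot t b (k + 1) - knot t b k) := by
  rw [knot_succ, add_sub_cancel_left, mul_div_cancel₀ _ (hb k).ne']
  ring

theorem knot_strictMono (htm : StrictMono t) (hb : ∀ k, 0 < b k) : StrictMono (knot t b) :=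
  strictMono_nat_of_lt_succ fun k => by
    rw [knot_succ]
    exact lt_add_of_pos_right _ (div_pos (sub_pos.2 (htm k.lt_succ_self)) (hb k))

theorem knot_nonneg (htm : StrictMono t) (hb : ∀ k, 0 < b k) (k : ℕ) : 0 ≤ knot t b k :=
  knot_zero (t := t) (b := b) ▸ (knot_strictMono htm hb).monotone k.zero_le

theorem tendsto_knot_atTop (htm : StrictMono t) (hbm : Monotone b) (hb : ∀ k, 0 < b k)
    (hsum : ∑' k, ENNReal.ofReal ((t (k + 1) - t k) / b (k + 1)) = ⊤) :
    Tendsto (knot t b) atTop atTop := by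
  have hterm : ∀ k, 0 ≤ (t (k + 1) - t k) / b (k + 1) :=
    fun k => div_nonneg (sub_pos.2 (htm k.lt_succ_self)).le (hb _).le
  have hdiv : ¬ Summable fun k => (t (k + 1) - t k) / b (k + 1) := fun hs =>
    ENNReal.ofReal_ne_top (ENNReal.ofReal_tsum_of_nonneg hterm hs ▸ hsum)
  refine tendsto_atTop_mono (fun N => Finset.sum_le_sum fun i _ => ?_)
    ((not_summable_iff_tendsto_nat_atTop_of_nonneg hterm).1 hdiv)
  exact div_le_div_of_nonneg_left (sub_pos.2 (htm i.lt_succ_self)).le (hb i) (hbm i.le_succ)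

theorem exists_mem_Ico_knot (hknot : Tendsto (knot t b) atTop atTop) {r : ℝ} (hr : 0 ≤ r) :
    ∃ k, r ∈ Ico (knot t b k) (knot t b (k + 1)) :=
  have ⟨_, hN⟩ := (hknot.eventually_gt_atTop r).exists
  exists_le_and_lt_succ (knot_zero (t := t) (b := b) ▸ hr) hN

theorem mul_knot_sub_le_sub (htm : StrictMono t) (hbm : Monotone b) (hb : ∀ k, 0 < b k)
    {k j : ℕ} (hkj : k ≤ j) : b k * (knot t b j - knot t b k) ≤ t j - t k := by
  induction j, hkj using Nat.le_induction with
  | base => simp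
  | succ j hkj ih =>
    have hstep := (knot_strictMono htm hb).monotone j.le_succ
    nlinarith [succ_eq_add_mul_knot_sub (t := t) hb j, hbm hkj]

theorem sub_le_mul_knot_sub (htm : StrictMono t) (hbm : Monotone b) (hb : ∀ k, 0 < b k)
    {k j : ℕ} (hjk : j ≤ k) : t k - t j ≤ b k * (knot t b k - knot t b j) := by
  induction k, hjk using Nat.le_induction with
  | base => simp
  | succ k hjk ih =>
    have hstep := (knot_strictMono htm hb).monotone (hjk.trans k.le_succ)
    nlinarith [succ_eq_add_mul_knot_sub (t := t) hb k, hbm k.le_succ]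

theorem add_mul_knot_sub_le (htm : StrictMono t) (hbm : Monotone b) (hb : ∀ k, 0 < b k)
    (k j : ℕ) : t k + b k * (knot t b j - knot t b k) ≤ t j := by
  rcases le_total k j with hkj | hjk
  · linarith [mul_knot_sub_le_sub htm hbm hb hkj]
  · nlinarith [sub_le_mul_knot_sub htm hbm hb hjk]

end Knot

structure IsPiecewiseLinearProfile (t b : ℕ → ℝ) (v : ℝ → ℝ) : Prop where
  apply_zero : v 0 = t 0
  continuousOn : ContinuousOn v (Ici 0)
  strictMonoOn : StrictMonoOn v (Ici 0)
  hasDerivAt : ∀ r, 0 < r → ∀ k, t k < v r → v r < t (k + 1) → HasDerivAt v (b k) r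

namespace IsPiecewiseLinearProfile

variable {t b : ℕ → ℝ} {v : ℝ → ℝ}

theorem apply_eq_add_mul_sub (hv : IsPiecewiseLinearProfile t b v) {k : ℕ} {r₀ r : ℝ}
    (hr₀ : 0 ≤ r₀) (hk : v r₀ = t k) (hr : r₀ ≤ r) (hrk : v r ≤ t (k + 1)) :
    v r = t k + b k * (r - r₀) :=
  hk ▸ eq_add_mul_sub_of_hasDerivAt hr (hv.continuousOn.mono (Icc_subset_Ici_iff hr |>.2 hr₀))
    fun x hx => hv.hasDerivAt x (hr₀.trans_lt hx.1) k
      (hk ▸ hv.strictMonoOn (mem_Ici.2 hr₀) (mem_Ici.2 (hr₀.trans hx.1.le)) hx.1)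
      ((hv.strictMonoOn (mem_Ici.2 (hr₀.trans hx.1.le)) (mem_Ici.2 (hr₀.trans hr)) hx.2).trans_le
        hrk)

theorem exists_ge_apply_eq_succ (hv : IsPiecewiseLinearProfile t b v) (htm : StrictMono t)
    (hb : ∀ k, 0 < b k) {k : ℕ} {r₀ : ℝ} (hr₀ : 0 ≤ r₀) (hk : v r₀ = t k) :
    ∃ r, r₀ ≤ r ∧ v r = t (k + 1) := by
  have htk := htm k.lt_succ_self
  -- beyond `r₀` the graph is the line of slope `b k` for as long as it stays below `t (k + 1)`
  obtain ⟨r₁, hr₁, hle⟩ : ∃ r₁, r₀ ≤ r₁ ∧ t (k + 1) ≤ v r₁ := by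
    by_contra! hlt
    set R := r₀ + (t (k + 1) - t k) / b k
    have hR : r₀ ≤ R := le_add_of_nonneg_right (div_pos (sub_pos.2 htk) (hb k)).le
    have hvR := hv.apply_eq_add_mul_sub hr₀ hk hR (hlt R hR).le
    rw [add_sub_cancel_left, mul_div_cancel₀ _ (hb k).ne', add_sub_cancel] at hvR
    exact (hlt R hR).ne hvR
  obtain ⟨r, hr, hvr⟩ := intermediate_value_Icc hr₁
    (hv.continuousOn.mono (Icc_subset_Ici_iff hr₁ |>.2 hr₀)) ⟨hk ▸ htk.le, hle⟩
  exact ⟨r, hr.1, hvr⟩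

theorem apply_knot (hv : IsPiecewiseLinearProfile t b v) (htm : StrictMono t)
    (hb : ∀ k, 0 < b k) (k : ℕ) : v (knot t b k) = t k := by
  induction k with
  | zero => rw [knot_zero, hv.apply_zero]
  | succ k ih =>
    obtain ⟨r, hr, hvr⟩ := hv.exists_ge_apply_eq_succ htm hb (knot_nonneg htm hb k) ih
    have hline := hv.apply_eq_add_mul_sub (knot_nonneg htm hb k) ih hr hvr.le
    have hrk : r = knot t b (k + 1) := by
      have hgap : r - knot t b k = (t (k + 1) - t k) / b k := by
        rw [eq_div_iff (hb k).ne']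
        linarith
      rw [knot_succ, ← hgap, add_sub_cancel]
    rwa [← hrk]

theorem apply_eq_of_mem_Icc_knot (hv : IsPiecewiseLinearProfile t b v) (htm : StrictMono t)
    (hb : ∀ k, 0 < b k) {k : ℕ} {r : ℝ} (hr : r ∈ Icc (knot t b k) (knot t b (k + 1))) :
    v r = t k + b k * (r - knot t b k) :=
  have hr₀ := knot_nonneg htm hb k
  hv.apply_eq_add_mul_sub hr₀ (hv.apply_knot htm hb k) hr.1 <|
    hv.apply_knot htm hb (k + 1) ▸
      hv.strictMonoOn.monotoneOn (mem_Ici.2 (hr₀.trans hr.1)) (mem_Ici.2 (knot_nonneg htm hb _))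
        hr.2

theorem add_mul_sub_knot_le (hv : IsPiecewiseLinearProfile t b v) (htm : StrictMono t)
    (hbm : Monotone b) (hb : ∀ k, 0 < b k) (hknot : Tendsto (knot t b) atTop atTop) (k : ℕ)
    {r : ℝ} (hr : 0 ≤ r) : t k + b k * (r - knot t b k) ≤ v r := by
  obtain ⟨j, hj⟩ := exists_mem_Ico_knot hknot hr
  rw [hv.apply_eq_of_mem_Icc_knot htm hb (Ico_subset_Icc_self hj)]
  -- compare the two lines at the end of the `j`-th piece where their difference is largest
  rcases le_total k j with hkj | hjk
  · nlinarith [add_mul_knot_sub_le htm hbm hb k j, hbm hkj, hj.1]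
  · nlinarith [add_mul_knot_sub_le htm hbm hb k (j + 1), hbm hjk, hj.2,
      succ_eq_add_mul_knot_sub (t := t) hb j]

theorem mul_sub_le_of_knot_le (hv : IsPiecewiseLinearProfile t b v) (htm : StrictMono t)
    (hbm : Monotone b) (hb : ∀ k, 0 < b k) (hknot : Tendsto (knot t b) atTop atTop) {k : ℕ}
    {r s : ℝ} (hr : knot t b k ≤ r) (hs : s ≤ b k) :
    r * s - v r ≤ knot t b k * s - v (knot t b k) := by
  rw [hv.apply_knot htm hb]
  nlinarith [hv.add_mul_sub_knot_le htm hbm hb hknot k ((knot_nonneg htm hb k).trans hr)]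

theorem mul_sub_le_of_le_knot_succ (hv : IsPiecewiseLinearProfile t b v) (htm : StrictMono t)
    (hbm : Monotone b) (hb : ∀ k, 0 < b k) (hknot : Tendsto (knot t b) atTop atTop) {k : ℕ}
    {r s : ℝ} (hr₀ : 0 ≤ r) (hr : r ≤ knot t b (k + 1)) (hs : b k ≤ s) :
    r * s - v r ≤ knot t b (k + 1) * s - v (knot t b (k + 1)) := by
  rw [hv.apply_knot htm hb]
  nlinarith [hv.add_mul_sub_knot_le htm hbm hb hknot k hr₀, succ_eq_add_mul_knot_sub (t := t) hb k]

theorem mul_sub_le_of_mem_Icc (hv : IsPiecewiseLinearProfile t b v) (htm : StrictMono t)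
    (hbm : Monotone b) (hb : ∀ k, 0 < b k) (hknot : Tendsto (knot t b) atTop atTop) {k : ℕ}
    {r s : ℝ} (hr : 0 ≤ r) (hs : s ∈ Icc (b k) (b (k + 1))) :
    r * s - v r ≤ knot t b (k + 1) * s - v (knot t b (k + 1)) :=
  (le_total r (knot t b (k + 1))).elim
    (fun h => hv.mul_sub_le_of_le_knot_succ htm hbm hb hknot hr h hs.1)
    (fun h => hv.mul_sub_le_of_knot_le htm hbm hb hknot h hs.2)

theorem convexOn_comp_norm {E : Type*} [SeminormedAddCommGroup E] [NormedSpace ℝ E]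
    (hv : IsPiecewiseLinearProfile t b v) (htm : StrictMono t) (hbm : Monotone b)
    (hb : ∀ k, 0 < b k) (hknot : Tendsto (knot t b) atTop atTop) :
    ConvexOn ℝ univ fun x : E => v ‖x‖ := by
  refine .of_forall_le_of_exists_eq (g := fun k x => b k • ‖x‖ + (t k - b k * knot t b k))
    convex_univ (fun k => ((convexOn_norm convex_univ).smul (hb k).le).add_const _)
    (fun k x _ => ?_) fun x _ => ?_
  · linarith [smul_eq_mul (b k) ‖x‖, hv.add_mul_sub_knot_le htm hbm hb hknot k (norm_nonneg x)]
  · obtain ⟨k, hk⟩ := exists_mem_Ico_knot hknot (norm_nonneg x)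
    refine ⟨k, ?_⟩
    rw [hv.apply_eq_of_mem_Icc_knot htm hb (Ico_subset_Icc_self hk), smul_eq_mul]
    ring

theorem tendsto_apply_div_atTop (hv : IsPiecewiseLinearProfile t b v) (htm : StrictMono t)
    (hbm : Monotone b) (hb : ∀ k, 0 < b k) (hknot : Tendsto (knot t b) atTop atTop)
    (hbl : Tendsto b atTop atTop) : Tendsto (fun r => v r / r) atTop atTop := by
  refine tendsto_atTop.2 fun C => ?_
  obtain ⟨k, hk⟩ := (hbl.eventually_ge_atTop (C + 1)).exists
  filter_upwards [eventually_ge_atTop (max 1 (b k * knot t b k - t k))] with r hr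
  have hr₁ : 1 ≤ r := (le_max_left _ _).trans hr
  have hr₂ : b k * knot t b k - t k ≤ r := (le_max_right _ _).trans hr
  rw [le_div_iff₀ (by linarith)]
  nlinarith [hv.add_mul_sub_knot_le htm hbm hb hknot k (by linarith : (0 : ℝ) ≤ r)]

end IsPiecewiseLinearProfile

theorem differentiableAt_and_inner_gradient_self_sub_eq {F : Type*} [NormedAddCommGroup F]
    [InnerProductSpace ℝ F] [CompleteSpace F] {f : F → ℝ} {x : F} {a c : ℝ}
    (hx : x ≠ 0 ∨ a = 0) (hf : f =ᶠ[𝓝 x] fun y => a * ‖y‖ - c) :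
    DifferentiableAt ℝ f x ∧ inner ℝ (gradient f x) x - f x = c := by
  have hd : DifferentiableAt ℝ (fun y : F => a * ‖y‖ - c) x := by
    rcases hx with hx | rfl
    · exact ((contDiffAt_norm ℝ hx).differentiableAt one_ne_zero |>.const_mul a).sub_const c
    · simp
  -- Euler's identity for the positively homogeneous function `a * ‖y‖`
  have hEuler : fderiv ℝ (fun y : F => a * ‖y‖ - c) x x = a * ‖x‖ := by
    rcases hx with hx | rfl
    · have hnorm := (contDiffAt_norm ℝ hx).differentiableAt one_ne_zero
      rw [fderiv_sub_const, fderiv_const_mul hnorm]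
      simp [hnorm.fderiv_norm_self]
    · simp
  refine ⟨hf.differentiableAt_iff.2 hd, ?_⟩
  rw [gradient, InnerProductSpace.toDual_symm_apply, hf.fderiv_eq, hEuler, hf.eq_of_nhds]
  ring

section Legendre

variable {n : ℕ} {v : ℝ → ℝ} {x : EuclideanSpace ℝ (Fin n)} {ρ : ℝ}

theorem conjR_comp_norm_eq (hρ : 0 ≤ ρ) (hx : x ≠ 0 ∨ ρ = 0)
    (hle : ∀ r, 0 ≤ r → r * ‖x‖ - v r ≤ ρ * ‖x‖ - v ρ) :
    conjR (fun y => v ‖y‖) x = ρ * ‖x‖ - v ρ := by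
  have hbound : ∀ y, inner ℝ x y - v ‖y‖ ≤ ρ * ‖x‖ - v ρ := fun y => by
    nlinarith [real_inner_le_norm x y, hle ‖y‖ (norm_nonneg y)]
  set y₀ := (ρ / ‖x‖) • x
  have hy₀ : inner ℝ x y₀ - v ‖y₀‖ = ρ * ‖x‖ - v ρ := by
    rcases hx with hx | rfl
    · have hx' : ‖x‖ ≠ 0 := norm_ne_zero_iff.2 hx
      rw [real_inner_smul_right, real_inner_self_eq_norm_sq, norm_smul, norm_div, norm_norm,
        Real.norm_of_nonneg hρ, div_mul_cancel₀ _ hx']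
      field_simp
    · simp [y₀]
  exact le_antisymm (ciSup_le hbound) (hy₀ ▸ le_ciSup ⟨_, forall_mem_range.2 hbound⟩ y₀)

theorem differentiableAt_conjR_comp_norm_and_inner_gradient_sub_eq
    {U : Set (EuclideanSpace ℝ (Fin n))} (hU : IsOpen U) (hxU : x ∈ U) (hρ : 0 ≤ ρ)
    (hU₀ : ∀ y ∈ U, y ≠ 0 ∨ ρ = 0)
    (hle : ∀ y ∈ U, ∀ r, 0 ≤ r → r * ‖y‖ - v r ≤ ρ * ‖y‖ - v ρ) :
    DifferentiableAt ℝ (conjR fun y => v ‖y‖) x ∧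
      inner ℝ (gradient (conjR fun y => v ‖y‖) x) x - conjR (fun y => v ‖y‖) x = v ρ :=
  differentiableAt_and_inner_gradient_self_sub_eq (hU₀ x hxU) <|
    eventually_of_mem (hU.mem_nhds hxU) fun y hy => conjR_comp_norm_eq hρ (hU₀ y hy) (hle y hy)

end Legendre

-- The sequences are indexed from 0: `t 0` and `b 0` are the paper's `t_1` and `b_1`.
theorem stmt13_general (n : ℕ) (t b : ℕ → ℝ)
    (htm : StrictMono t) (hbm : StrictMono b) (hbpos : ∀ k, 0 < b k)
    (hbl : Tendsto b atTop atTop)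
    (hsum : ∑' k, ENNReal.ofReal ((t (k + 1) - t k) / b (k + 1)) = ⊤)
    (v : ℝ → ℝ) (hv0 : v 0 = t 0) (hvc : ContinuousOn v (Set.Ici 0))
    (hvm : StrictMonoOn v (Set.Ici 0))
    (hvd : ∀ r : ℝ, 0 < r → ∀ k : ℕ, t k < v r → v r < t (k + 1) → HasDerivAt v (b k) r)
    (u : EuclideanSpace ℝ (Fin n) → ℝ) (hu : ∀ x, u x = v ‖x‖) :
    ConvexOn ℝ Set.univ u ∧
    Tendsto (fun x => u x / ‖x‖) (cocompact (EuclideanSpace ℝ (Fin n))) atTop ∧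
    ∀ᵐ x : EuclideanSpace ℝ (Fin n) ∂volume,
      (‖x‖ < b 0 → DifferentiableAt ℝ (conjR u) x ∧
        (inner ℝ (gradient (conjR u) x) x : ℝ) - conjR u x = t 0) ∧
      (∀ k : ℕ, b k < ‖x‖ → ‖x‖ < b (k + 1) → DifferentiableAt ℝ (conjR u) x ∧
        (inner ℝ (gradient (conjR u) x) x : ℝ) - conjR u x = t (k + 1)) := by
  obtain rfl : u = fun x => v ‖x‖ := funext hu
  have hv : IsPiecewiseLinearProfile t b v := ⟨hv0, hvc, hvm, hvd⟩
  have hb := hbm.monotone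
  have hknot := tendsto_knot_atTop htm hb hbpos hsum
  refine ⟨hv.convexOn_comp_norm htm hb hbpos hknot,
    (hv.tendsto_apply_div_atTop htm hb hbpos hknot hbl).comp tendsto_norm_cocompact_atTop,
    ae_of_all _ fun x => ⟨fun hx => ?_, fun k hk₁ hk₂ => ?_⟩⟩
  · rw [← hv.apply_knot htm hbpos 0]
    exact differentiableAt_conjR_comp_norm_and_inner_gradient_sub_eq
      (isOpen_lt continuous_norm continuous_const) hx (knot_nonneg htm hbpos 0)
      (fun _ _ => Or.inr knot_zero) fun y hy r hr =>
        hv.mul_sub_le_of_knot_le htm hb hbpos hknot (knot_zero.trans_le hr) hy.le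
  · rw [← hv.apply_knot htm hbpos (k + 1)]
    exact differentiableAt_conjR_comp_norm_and_inner_gradient_sub_eq
      ((isOpen_lt continuous_const continuous_norm).inter
        (isOpen_lt continuous_norm continuous_const)) ⟨hk₁, hk₂⟩ (knot_nonneg htm hbpos _)
      (fun y hy => Or.inl (norm_pos_iff.1 ((hbpos k).trans hy.1))) fun y hy r hr =>
        hv.mul_sub_le_of_mem_Icc htm hb hbpos hknot hr ⟨hy.1.le, hy.2.le⟩

/-- Let `(t_k)`, `(b_k)` be strictly increasing with `b_k > 0`,
`t_k, b_k → ∞` and `Σ (t_{k+1} − t_k)/b_{k+1} = ∞`. Let `v` be the piecewise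
linear function with `v(0) = t_1` and `v' = b_k` where `t_k < v < t_{k+1}`, and
`u(x) = v(|x|)`. Then `u` is convex and super-coercive, and a.e. on
`{b_{k-1} < |x| < b_k}` one has `∇u*(x)·x − u*(x) = t_k`, while a.e. on
`{|x| < b_1}` one has `∇u*(x)·x − u*(x) = t_1`. (Sequences are 0-indexed here:
`t 0` plays the role of `t_1`.) -/
theorem stmt13 (n : ℕ) (hn : 1 ≤ n) (t b : ℕ → ℝ)
    (htm : StrictMono t) (hbm : StrictMono b) (hbpos : ∀ k, 0 < b k)
    (htl : Tendsto t atTop atTop) (hbl : Tendsto b atTop atTop)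
    (hsum : ∑' k, ENNReal.ofReal ((t (k + 1) - t k) / b (k + 1)) = ⊤)
    (v : ℝ → ℝ) (hv0 : v 0 = t 0) (hvc : ContinuousOn v (Set.Ici 0))
    (hvm : StrictMonoOn v (Set.Ici 0))
    (hvd : ∀ r : ℝ, 0 < r → ∀ k : ℕ, t k < v r → v r < t (k + 1) → HasDerivAt v (b k) r)
    (u : EuclideanSpace ℝ (Fin n) → ℝ) (hu : ∀ x, u x = v ‖x‖) :
    ConvexOn ℝ Set.univ u ∧
    Tendsto (fun x => u x / ‖x‖) (cocompact (EuclideanSpace ℝ (Fin n))) atTop ∧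
    ∀ᵐ x : EuclideanSpace ℝ (Fin n) ∂volume,
      (‖x‖ < b 0 → DifferentiableAt ℝ (conjR u) x ∧
        (inner ℝ (gradient (conjR u) x) x : ℝ) - conjR u x = t 0) ∧
      (∀ k : ℕ, b k < ‖x‖ → ‖x‖ < b (k + 1) → DifferentiableAt ℝ (conjR u) x ∧
        (inner ℝ (gradient (conjR u) x) x : ℝ) - conjR u x = t (k + 1)) :=
  stmt13_general n t b htm hbm hbpos hbl hsum v hv0 hvc hvm hvd u hu
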